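/- arXiv:q-alg/9506016 — 4 statements merged into one kernel-verified Lean document; each statement's English description precedes it below -/
import Mathlib

section
/- With G_{j,j+1} defined as G_{j,j+1} = ((q⁻¹z_j − q z_{j+1})/(z_j − z_{j+1}))(K_{j,j+1} − 1) + q acting on ℂ(z₁,…,z_N), the operators G_{1,2},…,G_{N-1,N} satisfy the braid relations: G_{j,j+1}G_{k,k+1} = G_{k,k+1}G_{j,j+1} for |j−k| > 1 and G_{j,j+1}G_{j+1,j+2}G_{j,j+1} = G_{j+1,j+2}G_{j,j+1}G_{j+1,j+2}. -/
/-!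
Evaluated at a point `z`, each side of a relation is a linear combination of values `f (z ∘ π)`
with `π` in the group generated by the two transpositions involved. Disjoint transpositions
commute and `s t s = t s t` for overlapping ones, so both sides involve the same values; for
commuting operators the coefficients then agree trivially, and in the braid case by an identity of
rational functions in `z_a, z_b, z_c` with denominators the differences `z_a - z_b` etc.
-/

/-- The exchange operator `K_{j,k}` on functions of `z₁,…,z_N`. -/
def Kex {N : ℕ} (j k : Fin N) (f : (Fin N → ℂ) → ℂ) : (Fin N → ℂ) → ℂ :=
  fun z => f (z ∘ Equiv.swap j k)

/-- `G_{j,k} = ((q⁻¹ z_j − q z_k)/(z_j − z_k)) (K_{j,k} − 1) + q`. -/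
noncomputable def Gop {N : ℕ} (q : ℂ) (j k : Fin N) (f : (Fin N → ℂ) → ℂ) :
    (Fin N → ℂ) → ℂ :=
  fun z => (q⁻¹ * z j - q * z k) / (z j - z k) * (Kex j k f z - f z) + q * f z

/-- `G_{j,j+1}` (0-indexed: acts on the variables `z_j, z_{j+1}`). -/
noncomputable def Gadj {N : ℕ} (q : ℂ) (j : ℕ) (hj : j + 1 < N) :
    ((Fin N → ℂ) → ℂ) → (Fin N → ℂ) → ℂ :=
  Gop q ⟨j, by omega⟩ ⟨j + 1, hj⟩

namespace Equiv

theorem swap_mul_swap_comm {α : Type*} [DecidableEq α] {a b c d : α}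
    (hac : a ≠ c) (had : a ≠ d) (hbc : b ≠ c) (hbd : b ≠ d) :
    swap a b * swap c d = swap c d * swap a b := by
  have h := swap_apply_apply (swap a b) c d
  rw [swap_apply_of_ne_of_ne hac.symm hbc.symm, swap_apply_of_ne_of_ne had.symm hbd.symm] at h
  conv_rhs => rw [h]
  simp [mul_assoc]

theorem swap_braid {α : Type*} [DecidableEq α] {a b c : α} (hab : a ≠ b) (hac : a ≠ c)
    (hbc : b ≠ c) : swap a b * swap b c * swap a b = swap b c * swap a b * swap b c := by
  have h₁ := swap_apply_apply (swap a b) b c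
  have h₂ := swap_apply_apply (swap b c) a b
  rw [swap_inv, swap_apply_right, swap_apply_of_ne_of_ne hac.symm hbc.symm] at h₁
  rw [swap_inv, swap_apply_of_ne_of_ne hab hac, swap_apply_left] at h₂
  exact h₁.symm.trans h₂

end Equiv

open Equiv

theorem Gop_Gop_comm {N : ℕ} (q : ℂ) {a b c d : Fin N} (hac : a ≠ c) (had : a ≠ d)
    (hbc : b ≠ c) (hbd : b ≠ d) (f : (Fin N → ℂ) → ℂ) (z : Fin N → ℂ) :
    Gop q a b (Gop q c d f) z = Gop q c d (Gop q a b f) z := by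
  simp only [Gop, Kex, Function.comp_apply, swap_apply_of_ne_of_ne hac.symm hbc.symm,
    swap_apply_of_ne_of_ne had.symm hbd.symm, swap_apply_of_ne_of_ne hac had,
    swap_apply_of_ne_of_ne hbc hbd, Function.comp_assoc, ← Perm.coe_mul,
    swap_mul_swap_comm hac had hbc hbd]
  ring

theorem Gop_braid {N : ℕ} (q : ℂ) {a b c : Fin N} (f : (Fin N → ℂ) → ℂ)
    (z : Fin N → ℂ) (hab : z a ≠ z b) (hac : z a ≠ z c) (hbc : z b ≠ z c) :
    Gop q a b (Gop q b c (Gop q a b f)) z = Gop q b c (Gop q a b (Gop q b c f)) z := by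
  have hab' : a ≠ b := ne_of_apply_ne z hab
  have hac' : a ≠ c := ne_of_apply_ne z hac
  have hbc' : b ≠ c := ne_of_apply_ne z hbc
  simp only [Gop, Kex, Function.comp_apply, swap_apply_left, swap_apply_right,
    swap_apply_of_ne_of_ne hac'.symm hbc'.symm, swap_apply_of_ne_of_ne hab' hac',
    Function.comp_assoc, ← Perm.coe_mul, swap_mul_self, Perm.coe_one, Function.comp_id,
    swap_braid hab' hac' hbc']
  have := sub_ne_zero.2 hab
  have := sub_ne_zero.2 hac
  have := sub_ne_zero.2 hbc
  field_simp
  ring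

theorem Gadj_Gadj_comm {N : ℕ} (q : ℂ) {j k : ℕ} (hj : j + 1 < N) (hk : k + 1 < N)
    (hjk : j + 1 < k ∨ k + 1 < j) (f : (Fin N → ℂ) → ℂ) (z : Fin N → ℂ) :
    Gadj q j hj (Gadj q k hk f) z = Gadj q k hk (Gadj q j hj f) z := by
  apply Gop_Gop_comm <;> exact Fin.ne_of_val_ne (by dsimp only; omega)

theorem Gadj_braid {N : ℕ} (q : ℂ) {j : ℕ} (hj : j + 2 < N) (f : (Fin N → ℂ) → ℂ)
    {z : Fin N → ℂ} (hz : Function.Injective z) :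
    Gadj q j (Nat.lt_of_succ_lt hj) (Gadj q (j + 1) hj (Gadj q j (Nat.lt_of_succ_lt hj) f)) z
      = Gadj q (j + 1) hj (Gadj q j (Nat.lt_of_succ_lt hj) (Gadj q (j + 1) hj f)) z := by
  apply Gop_braid <;> exact hz.ne (Fin.ne_of_val_ne (by dsimp only; omega))

/-- Operator identities on `ℂ(z₁,…,z_N)` are read pointwise, at points `z` with pairwise
distinct coordinates. -/
theorem Gop_braid_relations {N : ℕ} (q : ℂ) :
    (∀ (j k : ℕ) (hj : j + 1 < N) (hk : k + 1 < N), (j + 1 < k ∨ k + 1 < j) →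
      ∀ (f : (Fin N → ℂ) → ℂ) (z : Fin N → ℂ), Function.Injective z →
        Gadj q j hj (Gadj q k hk f) z = Gadj q k hk (Gadj q j hj f) z) ∧
    (∀ (j : ℕ) (hj : j + 2 < N),
      ∀ (f : (Fin N → ℂ) → ℂ) (z : Fin N → ℂ), Function.Injective z →
        Gadj q j (by omega) (Gadj q (j + 1) (by omega) (Gadj q j (by omega) f)) z
          = Gadj q (j + 1) (by omega) (Gadj q j (by omega)
              (Gadj q (j + 1) (by omega) f)) z) :=
  ⟨fun _ _ hj hk hjk f z _ => Gadj_Gadj_comm q hj hk hjk f z,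
    fun _ hj f _ hz => Gadj_braid q hj f hz⟩
end

section
/- Uniqueness of normal form: let n ≤ N, and suppose f_{j₁,…,j_n}(z) are rational functions in z₁,…,z_N, indexed by subsets {j₁ < ⋯ < j_n} ⊆ {1,…,N}, such that the operator L̃ = Σ_{j₁<⋯<j_n} f_{j₁,…,j_n}(z) p^{ϑ_{j₁}}⋯p^{ϑ_{j_n}} annihilates every symmetric polynomial P in z₁,…,z_N, identically as a polynomial identity in the formal parameter p. Then all f_{j₁,…,j_n}(z) = 0. -/
/-!
Test the operator on the symmetric polynomial `P(w) = ∏_{i ∈ J₀} ∏_j (w_j - z_i)` at `p = 0`,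
which is zero exactly when some coordinate of `w` lies in `{z_i | i ∈ J₀}`. Scaling the
coordinates in `J` by `p = 0` keeps `w_i = z_i` for some `i ∈ J₀ \ J` whenever `J ≠ J₀`, so
every term but the `J₀` one dies; for `J = J₀` the coordinates are `0` on `J₀` and `z_j`
off `J₀`, none of which is a `z_i` with `i ∈ J₀` since `z` is injective and nonvanishing.
-/

open MvPolynomial

namespace MvPolynomial

variable {σ R : Type*} [Fintype σ] [CommRing R]

noncomputable def coordHittingPoly (s : Finset R) : MvPolynomial σ R :=
  ∏ a ∈ s, ∏ j, (X j - C a)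

theorem isSymmetric_coordHittingPoly (s : Finset R) :
    (coordHittingPoly s : MvPolynomial σ R).IsSymmetric := by
  intro e
  simp only [coordHittingPoly, map_prod, map_sub, rename_X, rename_C]
  exact Finset.prod_congr rfl fun a _ => Equiv.prod_comp e fun j => X j - C a

theorem eval_coordHittingPoly_eq_zero_iff [IsDomain R] (s : Finset R) (w : σ → R) :
    eval w (coordHittingPoly s) = 0 ↔ ∃ j, w j ∈ s := by
  simp only [coordHittingPoly, map_prod, map_sub, eval_X, eval_C, Finset.prod_eq_zero_iff,
    Finset.mem_univ, true_and, sub_eq_zero]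
  exact ⟨fun ⟨a, ha, j, hj⟩ => ⟨j, hj ▸ ha⟩, fun ⟨j, hj⟩ => ⟨w j, hj, j, rfl⟩⟩

end MvPolynomial

theorem normal_form_unique_general {N : ℕ} (n : ℕ)
    (f : Finset (Fin N) → (Fin N → ℂ) → ℂ)
    (hf : ∀ P : MvPolynomial (Fin N) ℂ,
      (∀ σ : Equiv.Perm (Fin N), rename σ P = P) →
      ∀ (p : ℂ) (z : Fin N → ℂ),
        ∑ J ∈ Finset.univ.filter (fun J : Finset (Fin N) => J.card = n),
          f J z * eval (fun i => if i ∈ J then p * z i else z i) P = 0) :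
    ∀ J : Finset (Fin N), J.card = n →
      ∀ z : Fin N → ℂ, Function.Injective z → (∀ i, z i ≠ 0) → f J z = 0 := by
  classical
  intro J₀ hJ₀ z hinj hz
  set s := J₀.image z
  have key := hf (coordHittingPoly s) (isSymmetric_coordHittingPoly s) 0 z
  rw [Finset.sum_eq_single_of_mem J₀ (by simp [hJ₀])] at key
  · refine (mul_eq_zero.mp key).resolve_right ?_
    rw [eval_coordHittingPoly_eq_zero_iff]
    rintro ⟨j, hj⟩
    obtain ⟨i, hi, hij⟩ := Finset.mem_image.mp hj
    by_cases hjJ₀ : j ∈ J₀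
    · simp only [hjJ₀, if_true, zero_mul] at hij
      exact hz i hij
    · simp only [hjJ₀, if_false] at hij
      exact hjJ₀ (hinj hij ▸ hi)
  · intro J hJ hne
    have hcard : J.card = J₀.card := by rw [(Finset.mem_filter.mp hJ).2, hJ₀]
    obtain ⟨i, hi, hiJ⟩ := Finset.not_subset.mp fun hsub =>
      hne (Finset.eq_of_subset_of_card_le hsub hcard.le).symm
    refine mul_eq_zero_of_right _ ((eval_coordHittingPoly_eq_zero_iff _ _).mpr ⟨i, ?_⟩)
    simpa [hiJ, s] using Finset.mem_image_of_mem z hi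

/-- uniqueness of the normal form: if the operator
`L̃ = Σ_{j₁<⋯<j_n} f_{j₁,…,j_n}(z) p^{ϑ_{j₁}} ⋯ p^{ϑ_{j_n}}` (here encoded by its
coefficient functions `f J` indexed by `n`-element subsets `J ⊆ {1,…,N}`, with
`p^{ϑ_j}` the operator rescaling `z_j` to `p z_j`) annihilates every symmetric
polynomial `P` in `z₁,…,z_N`, identically in the parameter `p`, then all the
coefficients `f J` vanish (as rational functions, i.e. at every generic point). -/
theorem normal_form_unique {N : ℕ} (n : ℕ) (hn : n ≤ N)
    (f : Finset (Fin N) → (Fin N → ℂ) → ℂ)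
    (hf : ∀ P : MvPolynomial (Fin N) ℂ,
      (∀ σ : Equiv.Perm (Fin N), rename σ P = P) →
      ∀ (p : ℂ) (z : Fin N → ℂ),
        ∑ J ∈ Finset.univ.filter (fun J : Finset (Fin N) => J.card = n),
          f J z * eval (fun i => if i ∈ J then p * z i else z i) P = 0) :
    ∀ J : Finset (Fin N), J.card = n →
      ∀ z : Fin N → ℂ, Function.Injective z → (∀ i, z i ≠ 0) → f J z = 0 :=
  normal_form_unique_general n f hf
end

section
/- Distinctness of spectral data: let q be a complex number transcendental over ℚ with 0 < |q| < 1. For N ∈ ℤ≥0 and a partition λ = (λ₁ ≥ ⋯ ≥ λ_N ≥ 0), set d_k = λ_k + (N−k)/2 and define E(λ,N) = Σ_{k=1}^N q^{−4 d_k} − (N/2)(1 + q²). Then the map (λ, N) ↦ E(λ,N) is injective on the set of pairs (N, λ) with λ a partition of length ≤ N. -/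
/-!
`E(λ, N)` is the value at `q` of the Laurent polynomial `∑ₖ T^{-4λₖ - 2(N-1-k)} - (N/2)(1 + T²)`
over `ℚ`, and since `q` is transcendental, evaluation at `q` is injective on `ℚ[T;T⁻¹]`.
The coefficient of `T²` is `-N/2`, which recovers `N`. The exponents `-4λₖ - 2(N-1-k)` are
nonpositive and strictly increasing in `k`, so the remaining part, a sum of distinct monomials
with coefficient `1`, recovers them in order, and hence `λ`.
-/

/-- The eigenvalue `E(λ,N) = Σ_{k=1}^N q^{−4 d_k} − (N/2)(1 + q²)` with
`d_k = λ_k + (N − k)/2` (so `−4 d_k = −4 λ_k − 2(N − k)`; 0-indexed below). -/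
noncomputable def specE (q : ℂ) (N : ℕ) (lam : Fin N → ℕ) : ℂ :=
  (∑ k : Fin N, q ^ (-(4 : ℤ) * lam k - 2 * ((N : ℤ) - 1 - (k : ℕ)))) -
    (N / 2 : ℂ) * (1 + q ^ 2)

namespace LaurentPolynomial

theorem eval₂_injective_of_transcendental {R A : Type*} [CommRing R] [CommRing A] [Algebra R A]
    {x : Aˣ} (hx : Transcendental R (x : A)) : Function.Injective (eval₂ (algebraMap R A) x) := by
  refine (injective_iff_map_eq_zero _).2 fun f hf => ?_
  obtain ⟨n, p, hp⟩ := exists_T_pow f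
  have hp0 : p = 0 := transcendental_iff.mp hx p <| by
    rw [Polynomial.aeval_def, ← eval₂_toLaurent, hp, map_mul, hf, zero_mul]
  rwa [hp0, map_zero, eq_comm, (isUnit_T _).mul_left_eq_zero] at hp

theorem coeff_sum_T {R : Type*} [Semiring R] (s : Finset ℤ) (n : ℤ) :
    (∑ m ∈ s, (T m : R[T;T⁻¹])).coeff n = if n ∈ s then 1 else 0 := by
  simp [AddMonoidAlgebra.coeff_sum, T_apply]

theorem sum_T_injective {R : Type*} [Semiring R] [Nontrivial R] :
    Function.Injective fun s : Finset ℤ => ∑ m ∈ s, (T m : R[T;T⁻¹]) := by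
  intro s t hst
  ext n
  have hn := congrArg (fun f : R[T;T⁻¹] => f.coeff n) hst
  simp only [coeff_sum_T] at hn
  split_ifs at hn with hs ht ht <;> simp_all

theorem sum_T_inj_of_strictMono {R ι : Type*} [Semiring R] [Nontrivial R] [Fintype ι]
    [LinearOrder ι] [WellFoundedLT ι] {e₁ e₂ : ι → ℤ} (h₁ : StrictMono e₁) (h₂ : StrictMono e₂) :
    ∑ i, (T (e₁ i) : R[T;T⁻¹]) = ∑ i, T (e₂ i) ↔ e₁ = e₂ := by
  refine ⟨fun h => ?_, fun h => h ▸ rfl⟩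
  rw [← Finset.sum_image h₁.injective.injOn, ← Finset.sum_image h₂.injective.injOn] at h
  have hrange := congrArg (fun s : Finset ℤ => (s : Set ℤ)) (sum_T_injective h)
  simp only [Finset.coe_image, Finset.coe_univ, Set.image_univ] at hrange
  exact (h₁.range_inj h₂).mp hrange

end LaurentPolynomial

open LaurentPolynomial

section SpectralData

variable {N : ℕ}

def specExponent (N : ℕ) (lam : Fin N → ℕ) (k : Fin N) : ℤ :=
  -(4 : ℤ) * lam k - 2 * ((N : ℤ) - 1 - (k : ℕ))

theorem specExponent_nonpos (lam : Fin N → ℕ) (k : Fin N) : specExponent N lam k ≤ 0 := by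
  have := k.isLt
  unfold specExponent
  omega

theorem specExponent_strictMono {lam : Fin N → ℕ} (hlam : Antitone lam) :
    StrictMono (specExponent N lam) := by
  intro i j hij
  have hl := hlam hij.le
  have hij' : (i : ℕ) < j := hij
  unfold specExponent
  omega

theorem specExponent_injective : Function.Injective (specExponent N) := by
  intro l₁ l₂ h
  funext k
  have := congrFun h k
  unfold specExponent at this
  omega

noncomputable def specLaurent (N : ℕ) (lam : Fin N → ℕ) : ℚ[T;T⁻¹] :=
  ∑ k, T (specExponent N lam k) - C ((N : ℚ) / 2) * (1 + T 2)

theorem eval₂_specLaurent (q : ℂˣ) (lam : Fin N → ℕ) :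
    eval₂ (algebraMap ℚ ℂ) q (specLaurent N lam) = specE q N lam := by
  simp [specLaurent, specE, specExponent]

theorem coeff_two_specLaurent (lam : Fin N → ℕ) :
    (specLaurent N lam).coeff 2 = -((N : ℚ) / 2) := by
  have hne_two : ∀ k, specExponent N lam k ≠ 2 := fun k => by linarith [specExponent_nonpos lam k]
  simp [specLaurent, ← smul_eq_C_mul, ← T_zero, hne_two]

end SpectralData

theorem specE_injective_general (q : ℂ) (hq : Transcendental ℚ q)
    (N₁ N₂ : ℕ) (l₁ : Fin N₁ → ℕ) (l₂ : Fin N₂ → ℕ)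
    (h₁ : Antitone l₁) (h₂ : Antitone l₂)
    (hE : specE q N₁ l₁ = specE q N₂ l₂) :
    ∃ h : N₁ = N₂, ∀ k : Fin N₁, l₁ k = l₂ (Fin.cast h k) := by
  have hq0 : q ≠ 0 := fun h => hq (h ▸ isAlgebraic_zero)
  have hL : specLaurent N₁ l₁ = specLaurent N₂ l₂ :=
    eval₂_injective_of_transcendental (x := Units.mk0 q hq0) hq <| by
      rw [eval₂_specLaurent, eval₂_specLaurent]
      exact hE
  obtain rfl : N₁ = N₂ := by
    have := congrArg (fun f : ℚ[T;T⁻¹] => f.coeff 2) hL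
    simp only [coeff_two_specLaurent] at this
    exact_mod_cast (div_left_inj' two_ne_zero).mp (neg_inj.mp this)
  have hexp : specExponent N₁ l₁ = specExponent N₁ l₂ :=
    (sum_T_inj_of_strictMono (specExponent_strictMono h₁) (specExponent_strictMono h₂)).mp
      (sub_left_injective hL)
  exact ⟨rfl, congrFun (specExponent_injective hexp)⟩

/-- distinctness of spectral data: for `q` transcendental over `ℚ`
with `0 < |q| < 1`, the map `(λ, N) ↦ E(λ,N)` is injective on pairs `(N, λ)`
with `λ` a partition of length at most `N`. -/
theorem specE_injective (q : ℂ) (hq : Transcendental ℚ q)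
    (h0 : 0 < ‖q‖) (h1 : ‖q‖ < 1)
    (N₁ N₂ : ℕ) (l₁ : Fin N₁ → ℕ) (l₂ : Fin N₂ → ℕ)
    (h₁ : Antitone l₁) (h₂ : Antitone l₂)
    (hE : specE q N₁ l₁ = specE q N₂ l₂) :
    ∃ h : N₁ = N₂, ∀ k : Fin N₁, l₁ k = l₂ (Fin.cast h k) :=
  specE_injective_general q hq N₁ N₂ l₁ l₂ h₁ h₂ hE
end

section
/- Refined character identity with sl₂-weight: for i ∈ {0,1}, Σ_{N ≡ i (mod 2), ℓ(λ) ≤ N} q^{N²/4 − i/4 + |λ|} ∏_{j=1}^m χ_{n_j}(z) = Σ_{n⁺, n⁻ ≥ 0, n⁺+n⁻ ≡ i (mod 2)} z^{n⁺ − n⁻} q^{(n⁺+n⁻)²/4 − i/4} / ((q;q)_{n⁺}(q;q)_{n⁻}), where χ_n(z) = (z^{n+1} − z^{−(n+1)})/(z − z^{−1}) = Σ_{a+b=n} z^{a−b}, as formal power series in q^{1/4} with coefficients in ℤ[z, z⁻¹]. -/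
open PowerSeries

/-- The `sl₂`-character `χ_n(z) = (z^{n+1} − z^{−(n+1)})/(z − z⁻¹) = Σ_{a+b=n} z^{a−b}`,
as an element of `ℚ(z)` (its coefficients lie in `ℤ[z,z⁻¹]`). -/
noncomputable def chiSl2 (n : ℕ) : RatFunc ℚ :=
  ∑ a ∈ Finset.range (n + 1), (RatFunc.X : RatFunc ℚ) ^ (2 * (a : ℤ) - n)

/-- The fermionic (spinon) side of the refined level-1 character formula with
`sl₂`-weights, parity `i`, after multiplying by `q^{i/4}` and substituting `q ↦ q⁴`,
truncated to the terms that can contribute in degree `≤ M`: partitions `λ` of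
length `≤ N` are encoded by antitone `μ : Fin N → Fin (M+1)`, and
`∏_j χ_{n_j}(z)` is the product over the distinct values `v` of `μ` of
`χ_{mult(v)}(z)`. -/
noncomputable def fermionicSideZ (i M : ℕ) : PowerSeries (RatFunc ℚ) :=
  ∑ N ∈ Finset.range (M + 1),
    if N % 2 = i then
      ∑ μ : Fin N → Fin (M + 1),
        (if Antitone (fun l => (μ l : ℕ)) then
          (PowerSeries.C (R := RatFunc ℚ) (∏ v ∈ Finset.univ.image μ,
              chiSl2 ((Finset.univ.filter (fun l => μ l = v)).card))) *
            (PowerSeries.X : PowerSeries (RatFunc ℚ)) ^ (N ^ 2 + 4 * ∑ l, (μ l : ℕ))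
        else 0)
    else 0

/-- The sum `Σ z^{n⁺−n⁻} q^{(n⁺+n⁻)²}/((q⁴;q⁴)_{n⁺}(q⁴;q⁴)_{n⁻})` (after `q ↦ q⁴`
and stripping `q^{-i/4}`), truncated to `n⁺, n⁻ ≤ M`. -/
noncomputable def spinonSideZ (i M : ℕ) : PowerSeries (RatFunc ℚ) :=
  ∑ np ∈ Finset.range (M + 1), ∑ nm ∈ Finset.range (M + 1),
    if (np + nm) % 2 = i then
      (PowerSeries.C (R := RatFunc ℚ) ((RatFunc.X : RatFunc ℚ) ^ ((np : ℤ) - nm))) *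
        (PowerSeries.X : PowerSeries (RatFunc ℚ)) ^ ((np + nm) ^ 2) *
        (∏ k ∈ Finset.Icc 1 np,
          (1 - (PowerSeries.X : PowerSeries (RatFunc ℚ)) ^ (4 * k)))⁻¹ *
        (∏ k ∈ Finset.Icc 1 nm,
          (1 - (PowerSeries.X : PowerSeries (RatFunc ℚ)) ^ (4 * k)))⁻¹
    else 0

/-!
Write `χ_n(z) = ∑_{a + b = n} z ^ a z⁻¹ ^ b`. Encoding a partition by its multiplicity vector
`c`, the product `∏ χ_{c_v}(z)` expands over the splittings `c = a + b`, so the fermionic side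
becomes a sum of `z ^ (|a| - |b|) q ^ ((|a| + |b|)² + 4 (wt a + wt b))` over pairs of multisets.
The generating function `G_n` of the size-`n` multisets of `{0, …, M}` by their sum satisfies
`G_{n+1} = G_n + q ^ (n+1) G_{n+1}` up to terms of degree `> M` (split according to whether `0`
occurs; if not, lower every element by one). This is the recursion of `1 / (q;q)_n`, so
`G_n ≡ 1 / (q;q)_n` modulo `q ^ (M+1)`, which is all the coefficient of `q ^ M` sees.
-/

open Finset

lemma List.exists_antitone_ofFn_eq {α : Type*} [Preorder α] {N : ℕ} {l : List α}
    (hl : l.SortedGE) (hN : l.length = N) : ∃ μ : Fin N → α, Antitone μ ∧ List.ofFn μ = l := by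
  subst hN
  exact ⟨l.get, hl.antitone_get, List.ofFn_get l⟩

lemma Finset.mem_piAntidiag_univ {ι : Type*} [Fintype ι] [DecidableEq ι] {n : ℕ} {a : ι → ℕ} :
    a ∈ piAntidiag univ n ↔ ∑ v, a v = n := by
  simp [mem_piAntidiag]

lemma Fin.count_univ_val_map {α : Type*} [DecidableEq α] {N : ℕ} (μ : Fin N → α) (v : α) :
    (univ.val.map μ).count v = #{l | μ l = v} := by
  rw [Multiset.count_map]; simp only [eq_comm]; rfl

section Antitone

variable {α : Type*} [LinearOrder α]

lemma injOn_fiberCard_antitone (N : ℕ) :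
    Set.InjOn (fun (μ : Fin N → α) v => #{l | μ l = v}) {μ | Antitone μ} := by
  intro μ hμ μ' hμ' h
  have hmap : univ.val.map μ = univ.val.map μ' :=
    Multiset.ext.mpr fun v => by simpa only [Fin.count_univ_val_map] using congrFun h v
  rw [Fin.univ_val_map, Fin.univ_val_map, Multiset.coe_eq_coe] at hmap
  exact List.ofFn_injective (hmap.eq_of_sortedGE (List.sortedGE_ofFn_iff.mpr hμ)
    (List.sortedGE_ofFn_iff.mpr hμ'))

variable [Fintype α]

lemma surjOn_fiberCard_antitone (N : ℕ) :
    Set.SurjOn (fun (μ : Fin N → α) v => #{l | μ l = v}) {μ | Antitone μ}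
      (piAntidiag univ N : Finset (α → ℕ)) := by
  intro c hc
  rw [mem_coe, ← map_sym_eq_piAntidiag, mem_map] at hc
  obtain ⟨m, -, rfl⟩ := hc
  obtain ⟨μ, hμ, hl⟩ := List.exists_antitone_ofFn_eq (N := N)
    (Multiset.pairwise_sort m.1 (· ≥ ·)).sortedGE (by rw [Multiset.length_sort]; exact m.2)
  refine ⟨μ, hμ, funext fun v => ?_⟩
  simp only [← Fin.count_univ_val_map, Fin.univ_val_map, hl, Multiset.sort_eq]
  rfl

theorem sum_antitone_eq_sum_piAntidiag {β : Type*} [AddCommMonoid β] (N : ℕ)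
    (f : (α → ℕ) → β) :
    ∑ μ : Fin N → α with Antitone μ, f (fun v => #{l | μ l = v}) =
      ∑ c ∈ piAntidiag univ N, f c := by
  refine sum_nbij _ (fun μ _ => ?_) (by simpa using injOn_fiberCard_antitone N)
    (by simpa using surjOn_fiberCard_antitone N) fun _ _ => rfl
  rw [mem_piAntidiag_univ,
    ← card_eq_sum_card_fiberwise (f := μ) (s := univ) (t := univ) (by simp), card_univ,
    Fintype.card_fin]

end Antitone

/-- The sum of the multiset of `Fin n` with multiplicity vector `a`. -/
def weight {n : ℕ} (a : Fin n → ℕ) : ℕ := ∑ v : Fin n, (v : ℕ) * a v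

lemma weight_add {n : ℕ} (a b : Fin n → ℕ) : weight (a + b) = weight a + weight b := by
  simp [weight, mul_add, sum_add_distrib]

lemma weight_cons {n : ℕ} (x : ℕ) (t : Fin n → ℕ) :
    weight (Fin.cons x t : Fin (n + 1) → ℕ) = weight t + ∑ v, t v := by
  simp [weight, Fin.sum_univ_succ, add_mul, sum_add_distrib]

lemma weight_snoc {n : ℕ} (t : Fin n → ℕ) (x : ℕ) :
    weight (Fin.snoc t x : Fin (n + 1) → ℕ) = weight t + n * x := by
  simp [weight, Fin.sum_univ_castSucc]

lemma weight_eq_weight_tail_add {n : ℕ} (a : Fin (n + 1) → ℕ) :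
    weight a = weight (Fin.tail a) + ∑ v, Fin.tail a v := by
  rw [← weight_cons (a 0), Fin.cons_self_tail]

lemma le_weight_of_last_ne_zero {n : ℕ} {a : Fin (n + 1) → ℕ} (h : a (Fin.last n) ≠ 0) :
    n ≤ weight a := by
  rw [← Fin.snoc_init_self a, weight_snoc]
  have : n ≤ n * a (Fin.last n) := Nat.le_mul_of_pos_right n (Nat.pos_of_ne_zero h)
  omega

lemma sum_fin_val_eq_weight {N M : ℕ} (μ : Fin N → Fin M) :
    ∑ l, (μ l : ℕ) = weight fun v => #{l | μ l = v} := by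
  rw [weight, ← sum_fiberwise univ μ]
  refine sum_congr rfl fun v _ => ?_
  rw [sum_congr rfl fun l hl => congrArg Fin.val (mem_filter.mp hl).2, sum_const, smul_eq_mul,
    mul_comm]

section GeneratingFunction

variable (R : Type*) [CommRing R]

/-- The size-`n` multisets of `{0, …, M}` counted by their sum, in `q = X ^ r`: the Gaussian
binomial `[M + n choose n]_q`. -/
noncomputable def weightGF (r M n : ℕ) : R⟦X⟧ :=
  ∑ a ∈ piAntidiag (univ : Finset (Fin (M + 1))) n, X ^ (r * weight a)

variable {R}

lemma weightGF_zero (r M : ℕ) : weightGF R r M 0 = 1 := by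
  simp [weightGF, weight]

lemma sum_filter_head_ne_zero (r M n : ℕ) :
    ∑ a ∈ piAntidiag (univ : Finset (Fin (M + 1))) (n + 1) with a 0 ≠ 0,
      (X : R⟦X⟧) ^ (r * weight a) = weightGF R r M n := by
  refine sum_nbij' (fun a => Fin.cons (a 0 - 1) (Fin.tail a))
    (fun b => Fin.cons (b 0 + 1) (Fin.tail b)) ?_ ?_ ?_ ?_ ?_
  · intro a ha
    simp only [mem_filter, mem_piAntidiag_univ, Fin.sum_univ_succ a] at ha
    simp only [mem_piAntidiag_univ, Fin.sum_cons, Fin.tail]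
    omega
  · intro b hb
    simp only [mem_piAntidiag_univ, Fin.sum_univ_succ b] at hb
    simp only [mem_filter, mem_piAntidiag_univ, Fin.sum_cons, Fin.cons_zero, Fin.tail]
    omega
  · intro a ha
    rw [Fin.cons_zero, Fin.tail_cons,
      Nat.sub_add_cancel (Nat.pos_of_ne_zero (mem_filter.mp ha).2), Fin.cons_self_tail]
  · intro b _
    simp
  · intro a _
    rw [weight_cons, weight_eq_weight_tail_add a]

/-- Lowering every element by one matches the multisets avoiding `0` with those avoiding `M`. -/
lemma sum_filter_head_eq_zero (r M n : ℕ) :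
    ∑ a ∈ piAntidiag (univ : Finset (Fin (M + 1))) (n + 1) with a 0 = 0,
      (X : R⟦X⟧) ^ (r * weight a) =
      X ^ (r * (n + 1)) *
        ∑ b ∈ piAntidiag (univ : Finset (Fin (M + 1))) (n + 1) with b (Fin.last M) = 0,
          X ^ (r * weight b) := by
  rw [mul_sum]
  refine sum_nbij' (fun a => Fin.snoc (Fin.tail a) 0) (fun b => Fin.cons 0 (Fin.init b))
    ?_ ?_ ?_ ?_ ?_
  · intro a ha
    simp only [mem_filter, mem_piAntidiag_univ, Fin.sum_univ_succ a] at ha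
    simp only [mem_filter, mem_piAntidiag_univ, Fin.sum_univ_castSucc, Fin.snoc_castSucc,
      Fin.snoc_last, Fin.tail, and_true]
    omega
  · intro b hb
    simp only [mem_filter, mem_piAntidiag_univ, Fin.sum_univ_castSucc b] at hb
    simp only [mem_filter, mem_piAntidiag_univ, Fin.sum_cons, Fin.cons_zero, Fin.init, and_true]
    omega
  · intro a ha
    rw [Fin.init_snoc, ← (mem_filter.mp ha).2, Fin.cons_self_tail]
  · intro b hb
    rw [Fin.tail_cons, ← (mem_filter.mp hb).2, Fin.snoc_init_self]
  · intro a ha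
    simp only [mem_filter, mem_piAntidiag_univ, Fin.sum_univ_succ a] at ha
    have hsum : ∑ v, Fin.tail a v = n + 1 := by simp only [Fin.tail]; omega
    rw [← pow_add, weight_snoc, weight_eq_weight_tail_add a, hsum]
    ring

lemma weightGF_succ (r M n : ℕ) :
    weightGF R r M (n + 1) = weightGF R r M n + X ^ (r * (n + 1)) *
      ∑ b ∈ piAntidiag (univ : Finset (Fin (M + 1))) (n + 1) with b (Fin.last M) = 0,
        X ^ (r * weight b) := by
  rw [← sum_filter_head_ne_zero r M n, ← sum_filter_head_eq_zero r M n, weightGF,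
    ← sum_filter_not_add_sum_filter _ (fun a : Fin (M + 1) → ℕ => a 0 = 0)]

/-- The multisets using the value `M` have weight at least `M`, so they do not matter
modulo `X ^ (M + 1)`. -/
lemma X_pow_dvd_weightGF_succ_mul_sub {r : ℕ} (hr : 0 < r) (M n : ℕ) :
    X ^ (M + 1) ∣ weightGF R r M (n + 1) * (1 - X ^ (r * (n + 1))) - weightGF R r M n := by
  have hrec := weightGF_succ (R := R) r M n
  set S := piAntidiag (univ : Finset (Fin (M + 1))) (n + 1)
  have hsplit : ∑ b ∈ S with b (Fin.last M) = 0, (X : R⟦X⟧) ^ (r * weight b) +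
      ∑ b ∈ S with ¬b (Fin.last M) = 0, X ^ (r * weight b) = weightGF R r M (n + 1) :=
    sum_filter_add_sum_filter_not _ _ _
  rw [show weightGF R r M (n + 1) * (1 - X ^ (r * (n + 1))) - weightGF R r M n =
      -(X ^ (r * (n + 1)) * ∑ b ∈ S with ¬b (Fin.last M) = 0, X ^ (r * weight b)) by
    linear_combination hrec + X ^ (r * (n + 1)) * hsplit, dvd_neg, mul_sum]
  refine dvd_sum fun b hb => ?_
  rw [← pow_add]
  refine pow_dvd_pow _ ?_
  have := le_weight_of_last_ne_zero (mem_filter.mp hb).2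
  nlinarith

lemma constantCoeff_prod_one_sub_X_pow {r : ℕ} (hr : 0 < r) (n : ℕ) :
    constantCoeff (∏ k ∈ Icc 1 n, (1 - X ^ (r * k)) : R⟦X⟧) = 1 := by
  rw [map_prod]
  refine prod_eq_one fun k hk => ?_
  have : r * k ≠ 0 := Nat.mul_ne_zero hr.ne' (by simp at hk; omega)
  simp [this]

lemma X_pow_dvd_weightGF_mul_prod_sub_one {r : ℕ} (hr : 0 < r) (M n : ℕ) :
    X ^ (M + 1) ∣ weightGF R r M n * ∏ k ∈ Icc 1 n, (1 - X ^ (r * k)) - 1 := by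
  induction n with
  | zero => simp [weightGF_zero]
  | succ n ih =>
    rw [prod_Icc_succ_top (by omega), show weightGF R r M (n + 1) *
        ((∏ k ∈ Icc 1 n, (1 - X ^ (r * k))) * (1 - X ^ (r * (n + 1)))) - 1 =
        (weightGF R r M (n + 1) * (1 - X ^ (r * (n + 1))) - weightGF R r M n) *
          ∏ k ∈ Icc 1 n, (1 - X ^ (r * k)) +
        (weightGF R r M n * ∏ k ∈ Icc 1 n, (1 - X ^ (r * k)) - 1) by ring]
    exact dvd_add (dvd_mul_of_dvd_left (X_pow_dvd_weightGF_succ_mul_sub hr M n) _) ih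

theorem X_pow_dvd_weightGF_sub_inv {k : Type*} [Field k] {r : ℕ} (hr : 0 < r) (M n : ℕ) :
    X ^ (M + 1) ∣ weightGF k r M n - (∏ j ∈ Icc 1 n, (1 - X ^ (r * j)))⁻¹ := by
  set P : k⟦X⟧ := ∏ j ∈ Icc 1 n, (1 - X ^ (r * j))
  have hP : P * P⁻¹ = 1 :=
    PowerSeries.mul_inv_cancel _ (by rw [constantCoeff_prod_one_sub_X_pow hr]; exact one_ne_zero)
  rw [show weightGF k r M n - P⁻¹ = (weightGF k r M n * P - 1) * P⁻¹ by
    linear_combination (-(weightGF k r M n)) * hP]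
  exact dvd_mul_of_dvd_left (X_pow_dvd_weightGF_mul_prod_sub_one hr M n) _

end GeneratingFunction

lemma RatFunc.X_pow_mul_X_inv_pow {K : Type*} [Field K] (a b : ℕ) :
    (RatFunc.X : RatFunc K) ^ a * RatFunc.X⁻¹ ^ b = RatFunc.X ^ ((a : ℤ) - b) := by
  rw [inv_pow, ← zpow_natCast, ← zpow_natCast, ← zpow_neg, ← zpow_add₀ RatFunc.X_ne_zero,
    sub_eq_add_neg]

lemma chiSl2_eq_sum_antidiagonal (n : ℕ) :
    chiSl2 n = ∑ p ∈ antidiagonal n, RatFunc.X ^ p.1 * RatFunc.X⁻¹ ^ p.2 := by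
  rw [chiSl2, Nat.sum_antidiagonal_eq_sum_range_succ_mk]
  refine sum_congr rfl fun k hk => ?_
  rw [RatFunc.X_pow_mul_X_inv_pow, Nat.cast_sub (by simpa [Nat.lt_succ_iff] using hk)]
  ring_nf

lemma prod_chiSl2 {ι : Type*} [Fintype ι] [DecidableEq ι] (c : ι → ℕ) :
    ∏ v, chiSl2 (c v) = ∑ x ∈ Fintype.piFinset fun v => antidiagonal (c v),
      RatFunc.X ^ (∑ v, (x v).1) * RatFunc.X⁻¹ ^ (∑ v, (x v).2) := by
  simp_rw [chiSl2_eq_sum_antidiagonal, prod_univ_sum, prod_mul_distrib, prod_pow_eq_pow_sum]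

lemma sum_piAntidiag_sum_piFinset_antidiagonal {ι β : Type*} [Fintype ι] [DecidableEq ι]
    [AddCommMonoid β] (N : ℕ) (f : (ι → ℕ) → (ι → ℕ) → β) :
    ∑ c ∈ piAntidiag univ N, ∑ x ∈ Fintype.piFinset fun v => antidiagonal (c v),
        f (fun v => (x v).1) (fun v => (x v).2) =
      ∑ p ∈ antidiagonal N, ∑ a ∈ piAntidiag univ p.1, ∑ b ∈ piAntidiag univ p.2, f a b := by
  simp_rw [← sum_product', sum_sigma']
  refine sum_nbij' (fun x => ⟨(∑ v, (x.2 v).1, ∑ v, (x.2 v).2),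
      (fun v => (x.2 v).1, fun v => (x.2 v).2)⟩)
    (fun y => ⟨y.2.1 + y.2.2, fun v => (y.2.1 v, y.2.2 v)⟩) ?_ ?_ ?_ ?_ (fun _ _ => rfl)
  · rintro ⟨c, x⟩ h
    simp only [mem_sigma, mem_piAntidiag_univ, Fintype.mem_piFinset,
      HasAntidiagonal.mem_antidiagonal, mem_product] at h ⊢
    simp [← h.1, ← sum_add_distrib, h.2]
  · rintro ⟨p, a, b⟩ h
    simp only [mem_sigma, mem_piAntidiag_univ, Fintype.mem_piFinset,
      HasAntidiagonal.mem_antidiagonal, mem_product] at h ⊢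
    simp [sum_add_distrib, h.1, h.2.1, h.2.2]
  · rintro ⟨c, x⟩ h
    simp only [mem_sigma, Fintype.mem_piFinset, HasAntidiagonal.mem_antidiagonal] at h
    simp only [Sigma.mk.injEq, heq_eq_eq]
    exact ⟨funext h.2, trivial⟩
  · rintro ⟨p, a, b⟩ h
    simp only [mem_sigma, mem_piAntidiag_univ, HasAntidiagonal.mem_antidiagonal, mem_product] at h
    simp [h.2.1, h.2.2]

theorem sum_piAntidiag_prod_chiSl2 (r M N : ℕ) :
    ∑ c ∈ piAntidiag (univ : Finset (Fin (M + 1))) N,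
        C (∏ v, chiSl2 (c v)) * X ^ (r * weight c) =
      ∑ p ∈ antidiagonal N, C (RatFunc.X ^ p.1 * RatFunc.X⁻¹ ^ p.2) *
        weightGF (RatFunc ℚ) r M p.1 * weightGF (RatFunc ℚ) r M p.2 := by
  let f (a b : Fin (M + 1) → ℕ) : (RatFunc ℚ)⟦X⟧ :=
    C (RatFunc.X ^ (∑ v, a v) * RatFunc.X⁻¹ ^ (∑ v, b v)) *
      (X ^ (r * weight a) * X ^ (r * weight b))
  calc _ = ∑ c ∈ piAntidiag univ N, ∑ x ∈ Fintype.piFinset fun v => antidiagonal (c v),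
        f (fun v => (x v).1) (fun v => (x v).2) := by
        refine sum_congr rfl fun c _ => ?_
        rw [prod_chiSl2, map_sum, sum_mul]
        refine sum_congr rfl fun x hx => ?_
        have hc : c = (fun v => (x v).1) + fun v => (x v).2 :=
          funext fun v => (HasAntidiagonal.mem_antidiagonal.mp (Fintype.mem_piFinset.mp hx v)).symm
        rw [hc, weight_add, mul_add, pow_add]
    _ = _ := by
        rw [sum_piAntidiag_sum_piFinset_antidiagonal]
        refine sum_congr rfl fun p _ => ?_
        rw [mul_assoc, weightGF, weightGF, sum_mul_sum, mul_sum]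
        refine sum_congr rfl fun a ha => ?_
        rw [mul_sum]
        refine sum_congr rfl fun b hb => ?_
        rw [← mem_piAntidiag_univ.mp ha, ← mem_piAntidiag_univ.mp hb]

lemma sum_range_sum_antidiagonal {β : Type*} [AddCommMonoid β] (M : ℕ) (f : ℕ × ℕ → β) :
    ∑ N ∈ range (M + 1), ∑ p ∈ antidiagonal N, f p =
      ∑ p ∈ range (M + 1) ×ˢ range (M + 1), if p.1 + p.2 ≤ M then f p else 0 := by
  rw [← sum_filter,
    sum_comm' (t' := (range (M + 1) ×ˢ range (M + 1)).filter fun p => p.1 + p.2 ≤ M)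
      (s' := fun p => {p.1 + p.2})]
  · simp
  · intro N p
    simp only [mem_range, HasAntidiagonal.mem_antidiagonal, mem_singleton, mem_filter,
      mem_product]
    omega

lemma fermionicSideZ_eq_sum_piAntidiag (i M : ℕ) :
    fermionicSideZ i M = ∑ N ∈ range (M + 1), if N % 2 = i then
      X ^ (N ^ 2) * ∑ c ∈ piAntidiag (univ : Finset (Fin (M + 1))) N,
        C (∏ v, chiSl2 (c v)) * X ^ (4 * weight c) else 0 := by
  refine sum_congr rfl fun N _ => if_congr Iff.rfl ?_ rfl
  rw [← sum_antitone_eq_sum_piAntidiag N fun c => C (∏ v, chiSl2 (c v)) * X ^ (4 * weight c),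
    mul_sum, sum_filter]
  refine sum_congr rfl fun μ _ => if_congr Iff.rfl ?_ rfl
  have hprod : ∏ v ∈ univ.image μ, chiSl2 #{l | μ l = v} = ∏ v, chiSl2 #{l | μ l = v} :=
    prod_subset (subset_univ _) fun v _ hv => by
      have : #{l | μ l = v} = 0 := card_eq_zero.mpr <| filter_eq_empty_iff.mpr
        fun l _ (hl : μ l = v) => hv (hl ▸ mem_image_of_mem μ (mem_univ l))
      simp [this, chiSl2]
  rw [hprod, sum_fin_val_eq_weight, pow_add]
  ring

noncomputable def spinonTerm (H : ℕ → (RatFunc ℚ)⟦X⟧) (p : ℕ × ℕ) : (RatFunc ℚ)⟦X⟧ :=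
  C (RatFunc.X ^ ((p.1 : ℤ) - p.2)) * X ^ ((p.1 + p.2) ^ 2) * H p.1 * H p.2

lemma coeff_spinonTerm_congr {M : ℕ} {H H' : ℕ → (RatFunc ℚ)⟦X⟧}
    (h : ∀ n, X ^ (M + 1) ∣ H n - H' n) (p : ℕ × ℕ) :
    coeff M (spinonTerm H p) = coeff M (spinonTerm H' p) := by
  have hdvd : X ^ (M + 1) ∣ spinonTerm H p - spinonTerm H' p := by
    rw [spinonTerm, spinonTerm, show ∀ c : (RatFunc ℚ)⟦X⟧,
        c * H p.1 * H p.2 - c * H' p.1 * H' p.2 =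
          c * ((H p.1 - H' p.1) * H p.2 + H' p.1 * (H p.2 - H' p.2)) from fun c => by ring]
    exact dvd_mul_of_dvd_right
      (dvd_add (dvd_mul_of_dvd_left (h _) _) (dvd_mul_of_dvd_right (h _) _)) _
  rw [← sub_eq_zero, ← map_sub]
  exact X_pow_dvd_iff.mp hdvd M M.lt_succ_self

lemma coeff_spinonTerm_of_lt {M : ℕ} (H : ℕ → (RatFunc ℚ)⟦X⟧) {p : ℕ × ℕ}
    (h : M < (p.1 + p.2) ^ 2) : coeff M (spinonTerm H p) = 0 := by
  rw [spinonTerm, mul_comm (C _), mul_assoc, mul_assoc, coeff_X_pow_mul', if_neg h.not_ge]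

lemma fermionicSideZ_eq_sum_spinonTerm (i M : ℕ) :
    fermionicSideZ i M = ∑ p ∈ range (M + 1) ×ˢ range (M + 1),
      if p.1 + p.2 ≤ M ∧ (p.1 + p.2) % 2 = i then spinonTerm (weightGF (RatFunc ℚ) 4 M) p
      else 0 := by
  simp_rw [ite_and, ← sum_range_sum_antidiagonal, fermionicSideZ_eq_sum_piAntidiag,
    sum_piAntidiag_prod_chiSl2, mul_sum]
  refine sum_congr rfl fun N _ => ?_
  split_ifs with hN
  · refine sum_congr rfl fun p hp => ?_
    rw [HasAntidiagonal.mem_antidiagonal] at hp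
    subst hp
    rw [if_pos hN, spinonTerm, RatFunc.X_pow_mul_X_inv_pow]
    ring
  · refine (sum_eq_zero fun p hp => ?_).symm
    rw [HasAntidiagonal.mem_antidiagonal] at hp
    rw [if_neg (hp ▸ hN)]

lemma spinonSideZ_eq_sum_spinonTerm (i M : ℕ) :
    spinonSideZ i M = ∑ p ∈ range (M + 1) ×ˢ range (M + 1),
      if (p.1 + p.2) % 2 = i then spinonTerm (fun n => (∏ k ∈ Icc 1 n, (1 - X ^ (4 * k)))⁻¹) p
      else 0 := by
  rw [spinonSideZ, sum_product]
  rfl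

theorem refined_character_identity_general (i : ℕ) (M : ℕ) :
    PowerSeries.coeff (R := RatFunc ℚ) M (fermionicSideZ i M) =
      PowerSeries.coeff (R := RatFunc ℚ) M (spinonSideZ i M) := by
  rw [fermionicSideZ_eq_sum_spinonTerm, spinonSideZ_eq_sum_spinonTerm, map_sum, map_sum]
  refine sum_congr rfl fun p _ => ?_
  by_cases hpar : (p.1 + p.2) % 2 = i
  · by_cases hle : p.1 + p.2 ≤ M
    · rw [if_pos ⟨hle, hpar⟩, if_pos hpar]
      exact coeff_spinonTerm_congr (fun n => X_pow_dvd_weightGF_sub_inv (by norm_num) M n) p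
    · rw [if_neg (fun h => hle h.1), if_pos hpar, map_zero, coeff_spinonTerm_of_lt]
      nlinarith
  · rw [if_neg (fun h => hpar h.2), if_neg hpar]

/-- refined character identity with `sl₂`-weight: for `i ∈ {0,1}`,
`Σ_{N ≡ i (2), ℓ(λ) ≤ N} q^{N²/4 − i/4 + |λ|} ∏_j χ_{n_j}(z)
 = Σ_{n⁺+n⁻ ≡ i (2)} z^{n⁺−n⁻} q^{(n⁺+n⁻)²/4 − i/4}/((q;q)_{n⁺}(q;q)_{n⁻})`,
stated (after dividing by `q^{−i/4}` and substituting `q → q⁴`) coefficientwise as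
an identity of formal power series in `q` with coefficients in `ℤ[z,z⁻¹] ⊂ ℚ(z)`. -/
theorem refined_character_identity (i : ℕ) (hi : i < 2) (M : ℕ) :
    PowerSeries.coeff (R := RatFunc ℚ) M (fermionicSideZ i M) =
      PowerSeries.coeff (R := RatFunc ℚ) M (spinonSideZ i M) :=
  refined_character_identity_general i M
end
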